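/- Let A be a finite nonempty set, X the simplex in ℝ^A, g a continuously differentiable field of symmetric positive-definite matrices on an open set containing X, and v : X → ℝ^A Lipschitz continuous. For each x ∈ X let V(x) be the g(x)-projection of g(x)⁻¹ v(x) onto the tangent cone TC_X(x). Then there exists a constant K ≥ 0 such that (V(x') − V(x))ᵀ g(x)(x' − x) ≤ K (x' − x)ᵀ g(x)(x' − x) for all x, x' ∈ X (a one-sided Lipschitz condition). -/

import Mathlib

open Matrix

noncomputable section

/-- The tangent cone `TC_X(x)` of the simplex at `x`. -/
def tcone {A : Type*} [Fintype A] (x : A → ℝ) : Set (A → ℝ) :=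
  {z | (∑ α, z α) = 0 ∧ ∀ α, x α = 0 → 0 ≤ z α}

/-- The quadratic form `wᵀ G w = ‖w‖_G²` associated to a matrix `G`. -/
def qform {A : Type*} [Fintype A] (G : Matrix A A ℝ) (w : A → ℝ) : ℝ :=
  w ⬝ᵥ G.mulVec w

/-- `V` is the `G`-projection of `w` onto `C`. -/
def IsGProj {A : Type*} [Fintype A] (G : Matrix A A ℝ) (C : Set (A → ℝ))
    (w V : A → ℝ) : Prop :=
  V ∈ C ∧ ∀ z ∈ C, qform G (w - V) ≤ qform G (w - z)

/-!
For `z ∈ TC_X(y)` the projection satisfies the variational inequality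
`v(y) ⬝ (z - V(y)) ≤ V(y)ᵀ g(y) (z - V(y))`. Testing it at `x` with `z = V(x) + (x' - x)` and at
`x'` with `z = V(x') - (x' - x)` and adding gives, for `d = x' - x`,
`(V(x') - V(x))ᵀ g(x) d ≤ (v(x') - v(x)) ⬝ d + V(x')ᵀ (g(x) - g(x')) d`.
Both terms are `O(‖d‖²)`: `v` and `g` are Lipschitz on the compact convex simplex, and `V` is
bounded there (test with `z = 0`). Finally `g` is uniformly positive definite on the simplex, by
compactness, so `‖d‖²` is bounded by a multiple of `dᵀ g(x) d`.
-/

open Filter Topology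

section Projection

variable {A : Type*} [Fintype A]

theorem Matrix.IsSymm.dotProduct_mulVec_comm {G : Matrix A A ℝ} (hG : G.IsSymm) (a b : A → ℝ) :
    a ⬝ᵥ G *ᵥ b = b ⬝ᵥ G *ᵥ a := by
  rw [dotProduct_mulVec, ← mulVec_transpose, hG.eq, dotProduct_comm]

theorem qform_sub_smul {G : Matrix A A ℝ} (hG : G.IsSymm) (p u : A → ℝ) (t : ℝ) :
    qform G (p - t • u) = qform G p - 2 * t * (p ⬝ᵥ G *ᵥ u) + t ^ 2 * qform G u := by
  simp only [qform, mulVec_sub, mulVec_smul, sub_dotProduct, dotProduct_sub, smul_dotProduct,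
    dotProduct_smul, smul_eq_mul, hG.dotProduct_mulVec_comm u p]
  ring

theorem IsGProj.dotProduct_mulVec_sub_nonpos {G : Matrix A A ℝ} (hG : G.IsSymm)
    {C : Set (A → ℝ)} (hC : Convex ℝ C) {w V z : A → ℝ} (hV : IsGProj G C w V) (hz : z ∈ C) :
    (w - V) ⬝ᵥ G *ᵥ (z - V) ≤ 0 := by
  set a := (w - V) ⬝ᵥ G *ᵥ (z - V)
  set q := qform G (z - V)
  have hle : ∀ t ∈ Set.Ioo (0 : ℝ) 1, 2 * a ≤ t * q := by
    rintro t ⟨ht0, ht1⟩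
    have h := hV.2 _ (hC.add_smul_sub_mem hV.1 hz ⟨ht0.le, ht1.le⟩)
    rw [show w - (V + t • (z - V)) = (w - V) - t • (z - V) by abel, qform_sub_smul hG] at h
    nlinarith
  have hlim : Tendsto (fun t : ℝ => t * q) (𝓝[>] 0) (𝓝 0) := by
    simpa using (tendsto_nhdsWithin_of_tendsto_nhds (tendsto_id (x := 𝓝 (0 : ℝ)))).mul_const q
  have := ge_of_tendsto hlim (eventually_of_mem (Ioo_mem_nhdsGT one_pos) hle)
  linarith

variable [DecidableEq A]

theorem Matrix.PosDef.inv_mulVec_dotProduct_mulVec {G : Matrix A A ℝ} (hG : G.PosDef)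
    (v u : A → ℝ) : G⁻¹ *ᵥ v ⬝ᵥ G *ᵥ u = v ⬝ᵥ u := by
  rw [(isHermitian_iff_isSymm.mp hG.isHermitian).dotProduct_mulVec_comm, mulVec_mulVec,
    mul_nonsing_inv _ ((isUnit_iff_isUnit_det G).mp hG.isUnit), one_mulVec, dotProduct_comm]

theorem IsGProj.dotProduct_sub_le {G : Matrix A A ℝ} (hG : G.PosDef)
    {C : Set (A → ℝ)} (hC : Convex ℝ C) {v V z : A → ℝ} (hV : IsGProj G C (G⁻¹ *ᵥ v) V)
    (hz : z ∈ C) : v ⬝ᵥ (z - V) ≤ V ⬝ᵥ G *ᵥ (z - V) := by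
  have h := hV.dotProduct_mulVec_sub_nonpos (isHermitian_iff_isSymm.mp hG.isHermitian) hC hz
  rw [sub_dotProduct, hG.inv_mulVec_dotProduct_mulVec] at h
  linarith

end Projection

section TangentCone

variable {A : Type*} [Fintype A]

theorem zero_mem_tcone (x : A → ℝ) : (0 : A → ℝ) ∈ tcone x :=
  ⟨by simp, fun _ _ => le_rfl⟩

theorem add_mem_tcone {x a b : A → ℝ} (ha : a ∈ tcone x) (hb : b ∈ tcone x) :
    a + b ∈ tcone x :=
  ⟨by simp [Finset.sum_add_distrib, ha.1, hb.1], fun α hα => add_nonneg (ha.2 α hα) (hb.2 α hα)⟩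

theorem convex_tcone (x : A → ℝ) : Convex ℝ (tcone x) := by
  intro a ha b hb s t hs ht _
  refine ⟨?_, fun α hα => ?_⟩
  · simp [Finset.sum_add_distrib, ← Finset.mul_sum, ha.1, hb.1]
  · simpa using add_nonneg (mul_nonneg hs (ha.2 α hα)) (mul_nonneg ht (hb.2 α hα))

theorem sub_mem_tcone_of_mem_stdSimplex {x x' : A → ℝ} (hx : x ∈ stdSimplex ℝ A)
    (hx' : x' ∈ stdSimplex ℝ A) : x' - x ∈ tcone x :=
  ⟨by simp [Finset.sum_sub_distrib, hx.2, hx'.2], fun α hα => by simpa [hα] using hx'.1 α⟩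

end TangentCone

section SupNorm

variable {A : Type*} [Fintype A]

theorem norm_dotProduct_le_card_mul (a b : A → ℝ) :
    ‖a ⬝ᵥ b‖ ≤ Fintype.card A * (‖a‖ * ‖b‖) := by
  refine (norm_sum_le _ _).trans ((Finset.sum_le_card_nsmul _ _ (‖a‖ * ‖b‖) fun i _ => ?_).trans_eq
    (by simp))
  rw [norm_mul]
  exact mul_le_mul (norm_le_pi_norm a i) (norm_le_pi_norm b i) (norm_nonneg _) (norm_nonneg _)

theorem norm_of_mulVec_le_card_mul (M : A → A → ℝ) (b : A → ℝ) :
    ‖Matrix.of M *ᵥ b‖ ≤ Fintype.card A * (‖M‖ * ‖b‖) := by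
  refine (pi_norm_le_iff_of_nonneg (by positivity)).mpr fun i => ?_
  refine (norm_dotProduct_le_card_mul (M i) b).trans ?_
  gcongr
  exact norm_le_pi_norm M i

end SupNorm

theorem IsCompact.exists_pos_mul_sq_norm_le {A X : Type*} [Fintype A] [TopologicalSpace X]
    {K : Set X} (hK : IsCompact K) {G : X → Matrix A A ℝ} (hG : ContinuousOn G K)
    (hpd : ∀ x ∈ K, (G x).PosDef) :
    ∃ c > 0, ∀ x ∈ K, ∀ d : A → ℝ, c * ‖d‖ ^ 2 ≤ d ⬝ᵥ G x *ᵥ d := by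
  have hcont : ContinuousOn (fun p : X × (A → ℝ) => p.2 ⬝ᵥ G p.1 *ᵥ p.2)
      (K ×ˢ Metric.sphere 0 1) :=
    (continuous_snd.dotProduct (continuous_fst.matrix_mulVec continuous_snd)).comp_continuousOn
      ((hG.comp continuousOn_fst fun _ hp => hp.1).prodMk continuousOn_snd)
  obtain ⟨c, hc, hmin⟩ := (hK.prod (isCompact_sphere 0 1)).exists_forall_le' hcont
    fun p hp => (hpd p.1 hp.1).dotProduct_mulVec_pos (ne_zero_of_mem_unit_sphere ⟨p.2, hp.2⟩)
  refine ⟨c, hc, fun x hx d => ?_⟩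
  rcases eq_or_ne d 0 with rfl | hd
  · simp
  have hd' : 0 < ‖d‖ := norm_pos_iff.mpr hd
  have h := hmin (x, ‖d‖⁻¹ • d) ⟨hx, by simp [norm_smul, hd'.ne']⟩
  simp only [mulVec_smul, dotProduct_smul, smul_dotProduct, smul_eq_mul] at h
  calc c * ‖d‖ ^ 2 ≤ ‖d‖⁻¹ * (‖d‖⁻¹ * (d ⬝ᵥ G x *ᵥ d)) * ‖d‖ ^ 2 := by gcongr
    _ = d ⬝ᵥ G x *ᵥ d := by field_simp

section OneSidedLipschitz

variable {A : Type*} [Fintype A] [DecidableEq A]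

theorem IsGProj.norm_le {G : Matrix A A ℝ} (hG : G.PosDef) {c : ℝ} (hc : 0 < c)
    (hcoer : ∀ d : A → ℝ, c * ‖d‖ ^ 2 ≤ d ⬝ᵥ G *ᵥ d) {C : Set (A → ℝ)} (hC : Convex ℝ C)
    (h0 : (0 : A → ℝ) ∈ C) {v V : A → ℝ} (hV : IsGProj G C (G⁻¹ *ᵥ v) V) :
    ‖V‖ ≤ Fintype.card A * ‖v‖ / c := by
  have h := hV.dotProduct_sub_le hG hC h0
  rw [zero_sub, mulVec_neg, dotProduct_neg, dotProduct_neg, neg_le_neg_iff] at h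
  have hvV := (le_abs_self _).trans (norm_dotProduct_le_card_mul v V)
  rw [le_div_iff₀ hc]
  rcases (norm_nonneg V).eq_or_lt with hV0 | hV0
  · rw [← hV0, zero_mul]
    positivity
  · refine le_of_mul_le_mul_right ?_ hV0
    nlinarith [hcoer V]

theorem isGProj_tcone_sub_dotProduct_le {x x' v v' V V' : A → ℝ} {G G' : Matrix A A ℝ}
    (hx : x ∈ stdSimplex ℝ A) (hx' : x' ∈ stdSimplex ℝ A) (hG : G.PosDef) (hG' : G'.PosDef)
    (hV : IsGProj G (tcone x) (G⁻¹ *ᵥ v) V) (hV' : IsGProj G' (tcone x') (G'⁻¹ *ᵥ v') V') :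
    (V' - V) ⬝ᵥ G *ᵥ (x' - x) ≤ (v' - v) ⬝ᵥ (x' - x) + V' ⬝ᵥ (G - G') *ᵥ (x' - x) := by
  have h := hV.dotProduct_sub_le hG (convex_tcone x)
    (add_mem_tcone hV.1 (sub_mem_tcone_of_mem_stdSimplex hx hx'))
  have h' := hV'.dotProduct_sub_le hG' (convex_tcone x')
    (add_mem_tcone hV'.1 (sub_mem_tcone_of_mem_stdSimplex hx' hx))
  rw [add_sub_cancel_left] at h h'
  rw [← neg_sub x' x, mulVec_neg, dotProduct_neg, dotProduct_neg] at h'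
  rw [sub_dotProduct V' V, sub_dotProduct v' v, sub_mulVec, dotProduct_sub V']
  linarith

theorem isGProj_tcone_sub_dotProduct_le_mul_sq {x x' v v' V V' : A → ℝ} {g g' : A → A → ℝ}
    (hx : x ∈ stdSimplex ℝ A) (hx' : x' ∈ stdSimplex ℝ A) (hG : (of g).PosDef)
    (hG' : (of g').PosDef) (hV : IsGProj (of g) (tcone x) ((of g)⁻¹ *ᵥ v) V)
    (hV' : IsGProj (of g') (tcone x') ((of g')⁻¹ *ᵥ v') V') {Kv Lg M : ℝ}
    (hv : ‖v' - v‖ ≤ Kv * ‖x' - x‖) (hg : ‖g - g'‖ ≤ Lg * ‖x' - x‖) (hM : ‖V'‖ ≤ M) :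
    (V' - V) ⬝ᵥ of g *ᵥ (x' - x) ≤
      (Fintype.card A * Kv + Fintype.card A ^ 2 * Lg * M) * ‖x' - x‖ ^ 2 := by
  have key := isGProj_tcone_sub_dotProduct_le hx hx' hG hG' hV hV'
  rw [of_sub_of] at key
  set n : ℝ := (Fintype.card A : ℝ)
  set d := x' - x
  have hM0 : 0 ≤ M := (norm_nonneg _).trans hM
  have hvd : (v' - v) ⬝ᵥ d ≤ n * Kv * ‖d‖ ^ 2 := calc
    _ ≤ n * (‖v' - v‖ * ‖d‖) := (le_abs_self _).trans (norm_dotProduct_le_card_mul _ _)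
    _ ≤ n * (Kv * ‖d‖ * ‖d‖) := by gcongr
    _ = n * Kv * ‖d‖ ^ 2 := by ring
  have hgd : V' ⬝ᵥ of (g - g') *ᵥ d ≤ n ^ 2 * Lg * M * ‖d‖ ^ 2 := calc
    _ ≤ n * (‖V'‖ * ‖of (g - g') *ᵥ d‖) :=
      (le_abs_self _).trans (norm_dotProduct_le_card_mul _ _)
    _ ≤ n * (M * (n * (‖g - g'‖ * ‖d‖))) := by gcongr; exact norm_of_mulVec_le_card_mul _ _
    _ ≤ n * (M * (n * (Lg * ‖d‖ * ‖d‖))) := by gcongr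
    _ = n ^ 2 * Lg * M * ‖d‖ ^ 2 := by ring
  linarith

end OneSidedLipschitz

theorem stmt_17_general {A : Type*} [Fintype A] [DecidableEq A]
    (U : Set (A → ℝ)) (hXU : stdSimplex ℝ A ⊆ U)
    (g : (A → ℝ) → A → A → ℝ) (hg : ContDiffOn ℝ 1 g U)
    (hgpd : ∀ y ∈ U, (Matrix.of (g y)).PosDef)
    (v : (A → ℝ) → (A → ℝ)) (Kv : NNReal) (hv : LipschitzOnWith Kv v (stdSimplex ℝ A))
    (V : (A → ℝ) → (A → ℝ))
    (hV : ∀ y ∈ stdSimplex ℝ A,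
      IsGProj (Matrix.of (g y)) (tcone y) ((Matrix.of (g y))⁻¹.mulVec (v y)) (V y)) :
    ∃ K : ℝ, 0 ≤ K ∧ ∀ x ∈ stdSimplex ℝ A, ∀ x' ∈ stdSimplex ℝ A,
      (V x' - V x) ⬝ᵥ (Matrix.of (g x)).mulVec (x' - x) ≤
        K * ((x' - x) ⬝ᵥ (Matrix.of (g x)).mulVec (x' - x)) := by
  have hS : IsCompact (stdSimplex ℝ A) := isCompact_stdSimplex ℝ A
  have hpd : ∀ y ∈ stdSimplex ℝ A, (of (g y)).PosDef := fun y hy => hgpd y (hXU hy)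
  obtain ⟨c, hc, hcoer⟩ := hS.exists_pos_mul_sq_norm_le (hg.continuousOn.mono hXU) hpd
  obtain ⟨Lg, hLg⟩ := (hg.mono hXU).exists_lipschitzOnWith one_ne_zero (convex_stdSimplex ℝ A) hS
  obtain ⟨Mv, hMv, hvb⟩ := (hS.image_of_continuousOn hv.continuousOn).isBounded.exists_pos_norm_le
  set n : ℝ := (Fintype.card A : ℝ)
  set B := n * Kv + n ^ 2 * Lg * (n * Mv / c)
  refine ⟨B / c, by positivity, fun x hx x' hx' => ?_⟩
  have hVb : ‖V x'‖ ≤ n * Mv / c :=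
    ((hV x' hx').norm_le (hpd x' hx') hc (hcoer x' hx') (convex_tcone x') (zero_mem_tcone x')).trans
      (by gcongr; exact hvb _ (Set.mem_image_of_mem v hx'))
  calc _ ≤ B * ‖x' - x‖ ^ 2 :=
        isGProj_tcone_sub_dotProduct_le_mul_sq hx hx' (hpd x hx) (hpd x' hx') (hV x hx) (hV x' hx')
          (by simpa [dist_eq_norm] using hv.dist_le_mul x' hx' x hx)
          (by simpa [dist_eq_norm, norm_sub_rev x] using hLg.dist_le_mul x hx x' hx') hVb
    _ = B / c * (c * ‖x' - x‖ ^ 2) := by field_simp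
    _ ≤ B / c * ((x' - x) ⬝ᵥ of (g x) *ᵥ (x' - x)) := by gcongr; exact hcoer x hx _

/-- Lemma 1SL: the vector field of discontinuous Riemannian game dynamics
satisfies a one-sided Lipschitz condition: there is `K ≥ 0` such that
`(V(x') − V(x))ᵀ g(x)(x' − x) ≤ K (x' − x)ᵀ g(x)(x' − x)` for all `x, x'` in the simplex.
Here `g` is a `C¹` field of symmetric positive-definite matrices on an open set containing
the simplex, `v` is Lipschitz, and `V(y)` is the `g(y)`-projection of `g(y)⁻¹ v(y)` onto
`TC_X(y)`. -/
theorem stmt_17 {A : Type*} [Fintype A] [DecidableEq A] [Nonempty A]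
    (U : Set (A → ℝ)) (hU : IsOpen U) (hXU : stdSimplex ℝ A ⊆ U)
    (g : (A → ℝ) → A → A → ℝ) (hg : ContDiffOn ℝ 1 g U)
    (hgpd : ∀ y ∈ U, (Matrix.of (g y)).PosDef)
    (v : (A → ℝ) → (A → ℝ)) (Kv : NNReal) (hv : LipschitzOnWith Kv v (stdSimplex ℝ A))
    (V : (A → ℝ) → (A → ℝ))
    (hV : ∀ y ∈ stdSimplex ℝ A,
      IsGProj (Matrix.of (g y)) (tcone y) ((Matrix.of (g y))⁻¹.mulVec (v y)) (V y)) :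
    ∃ K : ℝ, 0 ≤ K ∧ ∀ x ∈ stdSimplex ℝ A, ∀ x' ∈ stdSimplex ℝ A,
      (V x' - V x) ⬝ᵥ (Matrix.of (g x)).mulVec (x' - x) ≤
        K * ((x' - x) ⬝ᵥ (Matrix.of (g x)).mulVec (x' - x)) :=
  stmt_17_general U hXU g hg hgpd v Kv hv V hV
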